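/- Suppose the vertex set of a graph G can be partitioned into two nonempty sets L and R with every vertex of L adjacent to every vertex of R. Then G is an OAT graph if and only if both induced subgraphs G[L] and G[R] are OAT graphs. -/

import Mathlib

/-- The disjoint union of two simple graphs. -/
def dUnion {V W : Type} (G : SimpleGraph V) (H : SimpleGraph W) : SimpleGraph (V ⊕ W) :=
  SimpleGraph.fromRel (fun a b =>
    (∃ x y, a = Sum.inl x ∧ b = Sum.inl y ∧ G.Adj x y) ∨
    (∃ x y, a = Sum.inr x ∧ b = Sum.inr y ∧ H.Adj x y))

/-- The join of two simple graphs: all edges between the two sides are added. -/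
def joinG {V W : Type} (G : SimpleGraph V) (H : SimpleGraph W) : SimpleGraph (V ⊕ W) :=
  SimpleGraph.fromRel (fun a b =>
    (∃ x y, a = Sum.inl x ∧ b = Sum.inl y ∧ G.Adj x y) ∨
    (∃ x y, a = Sum.inr x ∧ b = Sum.inr y ∧ H.Adj x y) ∨
    (∃ x y, a = Sum.inl x ∧ b = Sum.inr y))

/-- Adding a new vertex (`none`) whose neighbourhood is the set `X`. When
`X ⊆ N(v)` this is the operation of adding a vertex comparable to `v`. -/
def addComparable {V : Type} (G : SimpleGraph V) (X : Set V) : SimpleGraph (Option V) :=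
  SimpleGraph.fromRel (fun a b =>
    (∃ x y, a = some x ∧ b = some y ∧ G.Adj x y) ∨
    (∃ x, a = none ∧ b = some x ∧ x ∈ X))

/-- Attaching a complete graph on `q` vertices to the vertex `v`: every new
vertex is adjacent to `v` and to every other new vertex. -/
def attachClique {V : Type} (G : SimpleGraph V) (v : V) (q : ℕ) : SimpleGraph (V ⊕ Fin q) :=
  SimpleGraph.fromRel (fun a b =>
    (∃ x y, a = Sum.inl x ∧ b = Sum.inl y ∧ G.Adj x y) ∨
    (∃ i j, a = Sum.inr i ∧ b = Sum.inr j) ∨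
    (∃ i, a = Sum.inl v ∧ b = Sum.inr i))

/-- OAT graphs: graphs constructible from single vertices by disjoint union,
join, adding a comparable vertex, and attaching a clique to a vertex
(up to isomorphism). -/
inductive IsOAT : {V : Type} → SimpleGraph V → Prop
  | single : IsOAT (⊥ : SimpleGraph (Fin 1))
  | dunion {V W : Type} {G : SimpleGraph V} {H : SimpleGraph W} :
      IsOAT G → IsOAT H → IsOAT (dUnion G H)
  | join {V W : Type} {G : SimpleGraph V} {H : SimpleGraph W} :
      IsOAT G → IsOAT H → IsOAT (joinG G H)
  | comparable {V : Type} {G : SimpleGraph V} (v : V) (X : Set V)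
      (hX : X ⊆ G.neighborSet v) : IsOAT G → IsOAT (addComparable G X)
  | clique {V : Type} {G : SimpleGraph V} (v : V) (q : ℕ) (hq : 1 ≤ q) :
      IsOAT G → IsOAT (attachClique G v q)
  | iso {V W : Type} {G : SimpleGraph V} {H : SimpleGraph W} :
      IsOAT G → G ≃g H → IsOAT H

/-!
Call `S` a join side of `G` if every vertex of `S` is adjacent to every vertex outside `S`. By
induction on the construction, every nonempty join side of an OAT graph induces an OAT graph.
For a disjoint union, a join or an attached clique, a join side meets the two parts in join sides
of the parts, and the adjacency between these two pieces is all or nothing, so the side induces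
their join or disjoint union (or just one piece). For a comparable vertex `u` with partner `v`,
the non-adjacent vertices `u` and `v` lie on the same side, so `u` stays comparable inside it.
Conversely, `G` is the join of `G[L]` and `G[Lᶜ]`.
-/

open Sum Set SimpleGraph Function

section Adjacency

variable {V W : Type} {G : SimpleGraph V} {H : SimpleGraph W}

@[simp] lemma dUnion_adj_inl_inl {x y : V} : (dUnion G H).Adj (inl x) (inl y) ↔ G.Adj x y := by
  simpa [dUnion, fromRel_adj, adj_comm] using Adj.ne

@[simp] lemma dUnion_adj_inr_inr {x y : W} : (dUnion G H).Adj (inr x) (inr y) ↔ H.Adj x y := by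
  simpa [dUnion, fromRel_adj, adj_comm] using Adj.ne

@[simp] lemma dUnion_adj_inl_inr {x : V} {y : W} : ¬ (dUnion G H).Adj (inl x) (inr y) := by
  simp [dUnion, fromRel_adj]

@[simp] lemma joinG_adj_inl_inl {x y : V} : (joinG G H).Adj (inl x) (inl y) ↔ G.Adj x y := by
  simpa [joinG, fromRel_adj, adj_comm] using Adj.ne

@[simp] lemma joinG_adj_inr_inr {x y : W} : (joinG G H).Adj (inr x) (inr y) ↔ H.Adj x y := by
  simpa [joinG, fromRel_adj, adj_comm] using Adj.ne

@[simp] lemma joinG_adj_inl_inr {x : V} {y : W} : (joinG G H).Adj (inl x) (inr y) := by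
  simp [joinG, fromRel_adj]

@[simp] lemma addComparable_adj_some_some {X : Set V} {x y : V} :
    (addComparable G X).Adj (some x) (some y) ↔ G.Adj x y := by
  simpa [addComparable, fromRel_adj, adj_comm] using Adj.ne

@[simp] lemma addComparable_adj_none_some {X : Set V} {x : V} :
    (addComparable G X).Adj none (some x) ↔ x ∈ X := by
  simp [addComparable, fromRel_adj]

@[simp] lemma attachClique_adj_inl_inl {v x y : V} {q : ℕ} :
    (attachClique G v q).Adj (inl x) (inl y) ↔ G.Adj x y := by
  simpa [attachClique, fromRel_adj, adj_comm] using Adj.ne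

@[simp] lemma attachClique_adj_inr_inr {v : V} {q : ℕ} {i j : Fin q} :
    (attachClique G v q).Adj (inr i) (inr j) ↔ i ≠ j := by
  simp [attachClique, fromRel_adj]

@[simp] lemma attachClique_adj_inl_inr {v x : V} {q : ℕ} {i : Fin q} :
    (attachClique G v q).Adj (inl x) (inr i) ↔ x = v := by
  simp [attachClique, fromRel_adj, eq_comm]

@[simp] lemma dUnion_adj_inr_inl {x : V} {y : W} : ¬ (dUnion G H).Adj (inr y) (inl x) :=
  fun h => dUnion_adj_inl_inr h.symm

@[simp] lemma joinG_adj_inr_inl {x : V} {y : W} : (joinG G H).Adj (inr y) (inl x) :=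
  joinG_adj_inl_inr.symm

@[simp] lemma addComparable_adj_some_none {X : Set V} {x : V} :
    (addComparable G X).Adj (some x) none ↔ x ∈ X := by
  rw [adj_comm, addComparable_adj_none_some]

@[simp] lemma attachClique_adj_inr_inl {v x : V} {q : ℕ} {i : Fin q} :
    (attachClique G v q).Adj (inr i) (inl x) ↔ x = v := by
  rw [adj_comm, attachClique_adj_inl_inr]

end Adjacency

section Comap

variable {V W : Type} {G : SimpleGraph V} {H : SimpleGraph W}

@[simp] lemma dUnion_comap_inl : (dUnion G H).comap inl = G := by ext; simp

@[simp] lemma dUnion_comap_inr : (dUnion G H).comap inr = H := by ext; simp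

@[simp] lemma joinG_comap_inl : (joinG G H).comap inl = G := by ext; simp

@[simp] lemma joinG_comap_inr : (joinG G H).comap inr = H := by ext; simp

@[simp] lemma addComparable_comap_some {X : Set V} : (addComparable G X).comap some = G := by
  ext; simp

@[simp] lemma attachClique_comap_inl {v : V} {q : ℕ} : (attachClique G v q).comap inl = G := by
  ext; simp

@[simp] lemma attachClique_comap_inr {v : V} {q : ℕ} : (attachClique G v q).comap inr = ⊤ := by
  ext; simp

end Comap

lemma SimpleGraph.IsCompleteBetween.comap {V W : Type} {K : SimpleGraph W} {L : Set W}
    (h : K.IsCompleteBetween L Lᶜ) (f : V → W) :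
    (K.comap f).IsCompleteBetween (f ⁻¹' L) (f ⁻¹' L)ᶜ :=
  fun _ hx _ hy => h hx hy

section InducedIsos

variable {V W : Type}

noncomputable def SimpleGraph.comapInducePreimageIso (K : SimpleGraph W) {f : V → W}
    (hf : Injective f) {L : Set W} (hL : L ⊆ range f) :
    (K.comap f).induce (f ⁻¹' L) ≃g K.induce L where
  toEquiv := Equiv.ofBijective (fun x => ⟨f x, x.2⟩) <| by
    refine ⟨fun x y hxy => Subtype.ext (hf (congrArg Subtype.val hxy)), ?_⟩
    rintro ⟨a, ha⟩
    obtain ⟨x, rfl⟩ := hL ha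
    exact ⟨⟨x, ha⟩, rfl⟩
  map_rel_iff' := Iff.rfl

def SimpleGraph.joinGInduceIso (K : SimpleGraph (V ⊕ W)) (L : Set (V ⊕ W))
    (h : ∀ x y, inl x ∈ L → inr y ∈ L → K.Adj (inl x) (inr y)) :
    joinG ((K.comap inl).induce (inl ⁻¹' L)) ((K.comap inr).induce (inr ⁻¹' L)) ≃g K.induce L where
  toEquiv := Equiv.subtypeSum.symm
  map_rel_iff' := by
    rintro (⟨a, ha⟩ | ⟨a, ha⟩) (⟨b, hb⟩ | ⟨b, hb⟩)
    · simp [Equiv.subtypeSum]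
    · simp [Equiv.subtypeSum, h a b ha hb]
    · simp [Equiv.subtypeSum, (h b a hb ha).symm]
    · simp [Equiv.subtypeSum]

def SimpleGraph.dUnionInduceIso (K : SimpleGraph (V ⊕ W)) (L : Set (V ⊕ W))
    (h : ∀ x y, inl x ∈ L → inr y ∈ L → ¬ K.Adj (inl x) (inr y)) :
    dUnion ((K.comap inl).induce (inl ⁻¹' L)) ((K.comap inr).induce (inr ⁻¹' L)) ≃g K.induce L where
  toEquiv := Equiv.subtypeSum.symm
  map_rel_iff' := by
    rintro (⟨a, ha⟩ | ⟨a, ha⟩) (⟨b, hb⟩ | ⟨b, hb⟩)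
    · simp [Equiv.subtypeSum]
    · simp [Equiv.subtypeSum, h a b ha hb]
    · simp [Equiv.subtypeSum, adj_comm _ (inr a), h b a hb ha]
    · simp [Equiv.subtypeSum]

def addComparableInduceIso (G : SimpleGraph V) (X : Set V) (L : Set (Option V)) (hL : none ∈ L) :
    addComparable (G.induce (some ⁻¹' L)) {x | ↑x ∈ X} ≃g (addComparable G X).induce L where
  toFun a := a.elim ⟨none, hL⟩ fun x => ⟨some x, x.2⟩
  invFun
    | ⟨none, _⟩ => none
    | ⟨some x, hx⟩ => some ⟨x, hx⟩
  left_inv := by rintro (_ | _) <;> rfl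
  right_inv := by rintro ⟨_ | _, _⟩ <;> rfl
  map_rel_iff' := by
    rintro (_ | ⟨a, ha⟩) (_ | ⟨b, hb⟩) <;> simp

def SimpleGraph.joinGInduceComplIso (G : SimpleGraph V) {L : Set V} [DecidablePred (· ∈ L)]
    (h : G.IsCompleteBetween L Lᶜ) : joinG (G.induce L) (G.induce Lᶜ) ≃g G where
  toEquiv := Equiv.Set.sumCompl L
  map_rel_iff' := by
    rintro (⟨a, ha⟩ | ⟨a, ha⟩) (⟨b, hb⟩ | ⟨b, hb⟩)
    · simp
    · simp [h ha hb]
    · simp [(h hb ha).symm]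
    · simp

end InducedIsos

section OAT

variable {V : Type}

lemma isOAT_of_subsingleton [Subsingleton V] [Nonempty V] (G : SimpleGraph V) : IsOAT G := by
  have : Unique V := uniqueOfSubsingleton (Classical.arbitrary V)
  refine IsOAT.single.iso ⟨Equiv.ofUnique (Fin 1) V, fun {a b} => ?_⟩
  simp [Subsingleton.elim a b]

lemma attachClique_bot_eq_top (q : ℕ) : attachClique (⊥ : SimpleGraph (Fin 1)) 0 q = ⊤ := by
  ext a b
  rcases a with x | i <;> rcases b with y | j <;> simp [Fin.fin_one_eq_zero]

lemma isOAT_top [Finite V] [Nonempty V] : IsOAT (⊤ : SimpleGraph V) := by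
  rcases subsingleton_or_nontrivial V with _ | _
  · exact isOAT_of_subsingleton ⊤
  obtain ⟨n, ⟨e⟩⟩ := Finite.exists_equiv_fin V
  have hn : 2 ≤ n := Fin.nontrivial_iff_two_le.mp e.symm.nontrivial
  obtain ⟨q, rfl⟩ : ∃ q, n = 1 + q := ⟨n - 1, by omega⟩
  have hK := IsOAT.clique (G := ⊥) 0 q (by omega) IsOAT.single
  rw [attachClique_bot_eq_top] at hK
  exact hK.iso (Iso.completeGraph (finSumFinEquiv.trans e.symm))

end OAT

def HasOATJoinSides {V : Type} (G : SimpleGraph V) : Prop :=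
  ∀ S : Set V, S.Nonempty → G.IsCompleteBetween S Sᶜ → IsOAT (G.induce S)

namespace HasOATJoinSides

variable {V W : Type} {G : SimpleGraph V}

lemma isOAT [Nonempty V] (hG : HasOATJoinSides G) : IsOAT G :=
  (hG univ univ_nonempty fun _ _ _ h => absurd (mem_univ _) h).iso (induceUnivIso G)

lemma of_subsingleton [Subsingleton V] (G : SimpleGraph V) : HasOATJoinSides G :=
  fun _ hS _ => have := hS.to_subtype; isOAT_of_subsingleton _

lemma top [Finite V] : HasOATJoinSides (⊤ : SimpleGraph V) := by
  intro S hS _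
  have := hS.to_subtype
  rw [← completeGraph_eq_top, induce_top]
  exact isOAT_top

lemma of_iso {H : SimpleGraph W} (hG : HasOATJoinSides G) (e : G ≃g H) : HasOATJoinSides H :=
  fun L hL hLc => (hG (e ⁻¹' L) (hL.preimage e.surjective) fun _ hx _ hy =>
    e.map_adj_iff.mp (hLc hx hy)).iso (e.induce e.bijective.bijOn_preimage)

lemma isOAT_induce_of_sum {K : SimpleGraph (V ⊕ W)} {H : SimpleGraph W}
    (hKG : K.comap inl = G) (hKH : K.comap inr = H)
    (hG : HasOATJoinSides G) (hH : HasOATJoinSides H)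
    {L : Set (V ⊕ W)} (hL : L.Nonempty) (hLc : K.IsCompleteBetween L Lᶜ)
    (hcross : (∀ x y, inl x ∈ L → inr y ∈ L → K.Adj (inl x) (inr y)) ∨
      (∀ x y, inl x ∈ L → inr y ∈ L → ¬ K.Adj (inl x) (inr y))) :
    IsOAT (K.induce L) := by
  subst hKG hKH
  have hl := fun h => hG _ h (hLc.comap inl)
  have hr := fun h => hH _ h (hLc.comap inr)
  rcases (inl ⁻¹' L).eq_empty_or_nonempty with hl0 | hl1
  · have hLr : L ⊆ range inr := by
      rintro (x | y) h
      · exact absurd h (eq_empty_iff_forall_notMem.mp hl0 x)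
      · exact ⟨y, rfl⟩
    exact (hr (hL.preimage' hLr)).iso (K.comapInducePreimageIso inr_injective hLr)
  rcases (inr ⁻¹' L).eq_empty_or_nonempty with hr0 | hr1
  · have hLl : L ⊆ range inl := by
      rintro (x | y) h
      · exact ⟨x, rfl⟩
      · exact absurd h (eq_empty_iff_forall_notMem.mp hr0 y)
    exact (hl hl1).iso (K.comapInducePreimageIso inl_injective hLl)
  rcases hcross with hadj | hnadj
  · exact ((hl hl1).join (hr hr1)).iso (K.joinGInduceIso L hadj)
  · exact ((hl hl1).dunion (hr hr1)).iso (K.dUnionInduceIso L hnadj)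

lemma dUnion {H : SimpleGraph W} (hG : HasOATJoinSides G) (hH : HasOATJoinSides H) :
    HasOATJoinSides (dUnion G H) := fun _ hL hLc =>
  isOAT_induce_of_sum dUnion_comap_inl dUnion_comap_inr hG hH hL hLc
    (Or.inr fun _ _ _ _ => dUnion_adj_inl_inr)

lemma joinG {H : SimpleGraph W} (hG : HasOATJoinSides G) (hH : HasOATJoinSides H) :
    HasOATJoinSides (joinG G H) := fun _ hL hLc =>
  isOAT_induce_of_sum joinG_comap_inl joinG_comap_inr hG hH hL hLc
    (Or.inl fun _ _ _ _ => joinG_adj_inl_inr)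

lemma addComparable (hG : HasOATJoinSides G) {v : V} {X : Set V}
    (hX : X ⊆ G.neighborSet v) : HasOATJoinSides (addComparable G X) := by
  intro L hL hLc
  have hGc : G.IsCompleteBetween (some ⁻¹' L) (some ⁻¹' L)ᶜ := by
    simpa using hLc.comap some
  by_cases hn : none ∈ L
  · rcases (some ⁻¹' L).eq_empty_or_nonempty with h0 | h0
    · have hLn : L ⊆ {none} := by
        rintro (_ | x) hx
        · rfl
        · exact absurd hx (eq_empty_iff_forall_notMem.mp h0 x)
      have := hL.to_subtype
      have := (subsingleton_singleton.anti hLn).coe_sort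
      exact isOAT_of_subsingleton _
    · have hv : some v ∈ L := by
        by_contra hv
        exact G.irrefl (hX (addComparable_adj_none_some.mp (hLc hn hv)))
      exact (IsOAT.comparable (G := G.induce (some ⁻¹' L)) ⟨v, hv⟩ _ (fun x hx => hX hx)
        (hG _ h0 hGc)).iso (addComparableInduceIso G X L hn)
  · have hLs : L ⊆ range some := by
      rintro (_ | x) hx
      · exact absurd hx hn
      · exact ⟨x, rfl⟩
    have := hG _ (hL.preimage' hLs) hGc
    rw [← addComparable_comap_some (G := G) (X := X)] at this
    exact this.iso (comapInducePreimageIso _ (Option.some_injective V) hLs)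

lemma attachClique (hG : HasOATJoinSides G) (v : V) {q : ℕ} (hq : 1 ≤ q) :
    HasOATJoinSides (attachClique G v q) := by
  intro L hL hLc
  rcases Lᶜ.eq_empty_or_nonempty with hc | ⟨b, hb⟩
  · rw [compl_empty_iff.mp hc]
    have : Nonempty V := ⟨v⟩
    exact (hG.isOAT.clique v q hq).iso (induceUnivIso _).symm
  refine isOAT_induce_of_sum attachClique_comap_inl attachClique_comap_inr hG top hL hLc ?_
  by_cases hv : inl v ∈ L
  · -- `b ∉ L` is adjacent to `inl x` and `inr i`, and only `v` has neighbours in the clique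
    left
    intro x i hx hi
    rcases b with y | j
    · obtain rfl := attachClique_adj_inr_inl.mp (hLc hi hb)
      exact absurd hv hb
    · simpa using attachClique_adj_inl_inr.mp (hLc hx hb)
  · right
    intro x i hx _ hadj
    exact hv (attachClique_adj_inl_inr.mp hadj ▸ hx)

end HasOATJoinSides

lemma IsOAT.hasOATJoinSides {V : Type} {G : SimpleGraph V} (h : IsOAT G) : HasOATJoinSides G := by
  induction h with
  | single => exact .of_subsingleton _
  | dunion _ _ hG hH => exact hG.dUnion hH
  | join _ _ hG hH => exact hG.joinG hH
  | comparable v X hX _ hG => exact hG.addComparable hX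
  | clique v q hq _ hG => exact hG.attachClique v hq
  | iso _ e hG => exact hG.of_iso e

theorem stmt10_general {V : Type} (G : SimpleGraph V) (L : Set V)
    (hL : L.Nonempty) (hR : Lᶜ.Nonempty)
    (hjoin : ∀ x ∈ L, ∀ y ∈ Lᶜ, G.Adj x y) :
    IsOAT G ↔ (IsOAT (G.induce L) ∧ IsOAT (G.induce Lᶜ)) := by
  have hLR : G.IsCompleteBetween L Lᶜ := fun x hx y hy => hjoin x hx y hy
  have hRL : G.IsCompleteBetween Lᶜ Lᶜᶜ := by
    rw [compl_compl]
    exact hLR.symm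
  refine ⟨fun h => ⟨h.hasOATJoinSides L hL hLR, h.hasOATJoinSides Lᶜ hR hRL⟩,
    fun ⟨hGL, hGR⟩ => ?_⟩
  classical
  exact (hGL.join hGR).iso (G.joinGInduceComplIso hLR)

/-- If `V(G)` is partitioned into nonempty sets `L` and `Lᶜ` with every vertex of `L` adjacent to
every vertex of `Lᶜ`, then `G` is OAT iff both induced subgraphs are OAT. -/
theorem stmt10 {V : Type} [Fintype V] (G : SimpleGraph V) (L : Set V)
    (hL : L.Nonempty) (hR : Lᶜ.Nonempty)
    (hjoin : ∀ x ∈ L, ∀ y ∈ Lᶜ, G.Adj x y) :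
    IsOAT G ↔ (IsOAT (G.induce L) ∧ IsOAT (G.induce Lᶜ)) :=
  stmt10_general G L hL hR hjoin
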